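/- arXiv:2103.05429 — 4 statements merged into one kernel-verified Lean document; each statement's English description precedes it below -/
import Mathlib

section
/- Let U be a measurable space with probability measure η, let 0 < a < 1 < b, and let σ : U → [a,b] be measurable with ∫_U σ dη = 1. Then 0 ≤ ∫_U σ(v) log(σ(v)) dη(v) ≤ (a(b−1)/(b−a)) · log(a) + (b(1−a)/(b−a)) · log(b). -/
open MeasureTheory Real Set

/- Jensen gives the lower bound. For the upper bound, a convex function lies below its chord
on `[a, b]`, and the chord is affine, so integrating it only sees `∫ σ = 1`. -/

theorem ConvexOn.le_chord {a b x : ℝ} {f : ℝ → ℝ} (hf : ConvexOn ℝ (Icc a b) f) (hab : a < b)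
    (hx : x ∈ Icc a b) :
    f x ≤ (b - x) / (b - a) * f a + (x - a) / (b - a) * f b := by
  have hba : 0 < b - a := sub_pos.mpr hab
  have hcomb : (b - x) / (b - a) * a + (x - a) / (b - a) * b = x := by
    field_simp
    ring
  have key := hf.2 (left_mem_Icc.mpr hab.le) (right_mem_Icc.mpr hab.le)
    (div_nonneg (sub_nonneg.mpr hx.2) hba.le) (div_nonneg (sub_nonneg.mpr hx.1) hba.le)
    (by field_simp; ring)
  simpa only [smul_eq_mul, hcomb] using key

section

variable {U : Type*} [MeasurableSpace U] {μ : Measure U} {a b : ℝ} {σ : U → ℝ}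

theorem integrable_comp_of_mem_Icc [IsFiniteMeasure μ] {f : ℝ → ℝ} (hf : Continuous f)
    (hσm : AEMeasurable σ μ) (hσ : ∀ᵐ u ∂μ, σ u ∈ Icc a b) :
    Integrable (fun u ↦ f (σ u)) μ := by
  obtain ⟨C, hC⟩ := isCompact_Icc.exists_bound_of_continuousOn hf.continuousOn
  exact .of_bound (hf.measurable.comp_aemeasurable hσm).aestronglyMeasurable C
    (hσ.mono fun u hu ↦ hC _ hu)

theorem ConvexOn.integral_comp_le_chord [IsProbabilityMeasure μ] {f : ℝ → ℝ}
    (hf : ConvexOn ℝ (Icc a b) f) (hab : a < b) (hσ : ∀ᵐ u ∂μ, σ u ∈ Icc a b)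
    (hσi : Integrable σ μ) (hfσ : Integrable (fun u ↦ f (σ u)) μ) :
    ∫ u, f (σ u) ∂μ ≤
      (b - ∫ u, σ u ∂μ) / (b - a) * f a + ((∫ u, σ u ∂μ) - a) / (b - a) * f b := by
  have hlo : Integrable (fun u ↦ (b - σ u) / (b - a) * f a) μ :=
    (((integrable_const b).sub hσi).div_const _).mul_const _
  have hhi : Integrable (fun u ↦ (σ u - a) / (b - a) * f b) μ :=
    ((hσi.sub (integrable_const a)).div_const _).mul_const _
  calc ∫ u, f (σ u) ∂μ
      ≤ ∫ u, ((b - σ u) / (b - a) * f a + (σ u - a) / (b - a) * f b) ∂μ :=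
        integral_mono_ae hfσ (hlo.add hhi) (hσ.mono fun u hu ↦ hf.le_chord hab hu)
    _ = _ := by
        rw [integral_add hlo hhi, integral_mul_const, integral_mul_const, integral_div,
          integral_div, integral_sub (integrable_const b) hσi,
          integral_sub hσi (integrable_const a)]
        simp

end

/-- Bounds on the entropy of a density with values in `[a,b]`. -/
theorem entropy_bounds_of_density
    {U : Type*} [MeasurableSpace U] (η : Measure U) [IsProbabilityMeasure η]
    (a b : ℝ) (ha : 0 < a) (ha1 : a < 1) (hb : 1 < b)
    (σ : U → ℝ) (hσm : Measurable σ) (hσ : ∀ u, σ u ∈ Set.Icc a b)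
    (hnorm : ∫ u, σ u ∂η = 1) :
    0 ≤ ∫ v, σ v * Real.log (σ v) ∂η ∧
      ∫ v, σ v * Real.log (σ v) ∂η
        ≤ (a * (b - 1) / (b - a)) * Real.log a + (b * (1 - a) / (b - a)) * Real.log b := by
  have hσ' : ∀ᵐ u ∂η, σ u ∈ Icc a b := .of_forall hσ
  have hσi : Integrable σ η := integrable_comp_of_mem_Icc continuous_id hσm.aemeasurable hσ'
  have hent : Integrable (fun v ↦ σ v * log (σ v)) η :=
    integrable_comp_of_mem_Icc continuous_mul_log hσm.aemeasurable hσ'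
  constructor
  · simpa [hnorm] using convexOn_mul_log.map_integral_le continuous_mul_log.continuousOn
      isClosed_Ici (hσ'.mono fun u hu ↦ ha.le.trans hu.1) hσi hent
  · calc ∫ v, σ v * log (σ v) ∂η
        ≤ (b - 1) / (b - a) * (a * log a) + (1 - a) / (b - a) * (b * log b) := by
          simpa only [hnorm] using (convexOn_mul_log.subset (Icc_subset_Ici_self.trans
            (Ici_subset_Ici.mpr ha.le)) (convex_Icc a b)).integral_comp_le_chord
            (ha1.trans hb) hσ' hσi hent
      _ = _ := by ring
end

section
/- Let U be a measurable space with probability measure η, 0 < a < 1 < b < ∞, and let S_{a,b} be the set of measurable σ : U → [a,b] with ∫_U σ dη = 1. Define f^ε(σ)(u) = ε · [−log(σ(u)) + ∫_U log(σ(v)) σ(v) dη(v)] · σ(u). Then f^ε is Lipschitz continuous from (S_{a,b}, ‖·‖_{L^p_η}) to L^p_η(U) for 1 ≤ p < ∞: there exists L = L(a,b,ε) such that ‖f^ε(σ₁) − f^ε(σ₂)‖_{L^p_η} ≤ L · ‖σ₁ − σ₂‖_{L^p_η} for all σ₁, σ₂ ∈ S_{a,b}. One may take L = ε(L_{a,b}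 + b·L_{a,b} + M_{a,b}) where L_{a,b} and M_{a,b} are the Lipschitz constant and max of |x log x| on [a,b]. -/
/-!
With `G x = log x * x` and `I σ = ∫ G ∘ σ dη`,
`f^ε σ₁ - f^ε σ₂ = ε • (-(G ∘ σ₁ - G ∘ σ₂) + I σ₁ • (σ₁ - σ₂) + (I σ₁ - I σ₂) • σ₂)`.
By Minkowski's inequality the three terms have `L^p` norms at most `L ‖σ₁ - σ₂‖_p`,
`M ‖σ₁ - σ₂‖_p` and `b |I σ₁ - I σ₂|`, where `L` and `M` are a Lipschitz constant and a bound of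
`G` on `[a, b]`; and `|I σ₁ - I σ₂| ≤ L ‖σ₁ - σ₂‖_1 ≤ L ‖σ₁ - σ₂‖_p` since `η` is a probability
measure.
-/

open MeasureTheory Real

open scoped NNReal ENNReal

namespace MeasureTheory

variable {α : Type*} [MeasurableSpace α] {μ : Measure α} {p q : ℝ≥0∞}

lemma lpNorm_le_lpNorm_of_exponent_le {E : Type*} [NormedAddCommGroup E] [IsProbabilityMeasure μ]
    {f : α → E} (hpq : p ≤ q) (hf : MemLp f q μ) : lpNorm f p μ ≤ lpNorm f q μ := by
  rw [← toReal_eLpNorm hf.1, ← toReal_eLpNorm hf.1]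
  exact ENNReal.toReal_mono hf.eLpNorm_ne_top (eLpNorm_le_eLpNorm_of_exponent_le hpq hf.1)

lemma lpNorm_le_of_forall_norm_le {E : Type*} [NormedAddCommGroup E] [IsProbabilityMeasure μ]
    {f : α → E} {C : ℝ} (hf : ∀ x, ‖f x‖ ≤ C) : lpNorm f p μ ≤ C := by
  have : Nonempty α := nonempty_of_isProbabilityMeasure μ
  have hC : 0 ≤ C := (norm_nonneg _).trans (hf (Classical.arbitrary α))
  rcases eq_or_ne p 0 with rfl | hp
  · simpa using hC
  calc lpNorm f p μ ≤ lpNorm (fun _ ↦ C) p μ := lpNorm_mono_real (memLp_const C) hf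
    _ = C := by simp [lpNorm_const hp (IsProbabilityMeasure.ne_zero μ), abs_of_nonneg hC]

lemma lpNorm_ofReal_eq_integral_abs_rpow {f : α → ℝ} {p : ℝ} (hp : 0 < p)
    (hf : AEStronglyMeasurable f μ) :
    lpNorm f (ENNReal.ofReal p) μ = (∫ x, |f x| ^ p ∂μ) ^ (1 / p) := by
  rw [lpNorm_eq_integral_norm_rpow_toReal (by simpa using hp) ENNReal.ofReal_ne_top hf,
    ENNReal.toReal_ofReal hp.le, one_div]
  simp only [Real.norm_eq_abs]

end MeasureTheory

namespace LipschitzOnWith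

variable {α E F : Type*} [MeasurableSpace α] {μ : Measure α} {p : ℝ≥0∞}
  [NormedAddCommGroup E] [NormedAddCommGroup F] {G : E → F} {K : ℝ≥0} {s : Set E}
  {σ₁ σ₂ : α → E}

lemma lpNorm_comp_sub_le (hG : LipschitzOnWith K G s) (h₁ : ∀ x, σ₁ x ∈ s) (h₂ : ∀ x, σ₂ x ∈ s)
    (hσ : MemLp (σ₁ - σ₂) p μ) :
    lpNorm (fun x ↦ G (σ₁ x) - G (σ₂ x)) p μ ≤ K * lpNorm (σ₁ - σ₂) p μ :=
  calc lpNorm (fun x ↦ G (σ₁ x) - G (σ₂ x)) p μ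
      ≤ lpNorm ((K : ℝ) • fun x ↦ ‖(σ₁ - σ₂) x‖) p μ :=
        lpNorm_mono_real (hσ.norm.const_smul _) fun x ↦ hG.norm_sub_le (h₁ x) (h₂ x)
    _ = K * lpNorm (σ₁ - σ₂) p μ := by
        rw [lpNorm_const_smul, lpNorm_norm hσ.1]
        simp

lemma norm_integral_comp_sub_le [NormedSpace ℝ F] [IsProbabilityMeasure μ]
    (hG : LipschitzOnWith K G s) (h₁ : ∀ x, σ₁ x ∈ s) (h₂ : ∀ x, σ₂ x ∈ s) (hp : 1 ≤ p)
    (hi₁ : Integrable (fun x ↦ G (σ₁ x)) μ) (hi₂ : Integrable (fun x ↦ G (σ₂ x)) μ)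
    (hσ : MemLp (σ₁ - σ₂) p μ) :
    ‖∫ x, G (σ₁ x) ∂μ - ∫ x, G (σ₂ x) ∂μ‖ ≤ K * lpNorm (σ₁ - σ₂) p μ := by
  rw [← integral_sub hi₁ hi₂]
  calc ‖∫ x, G (σ₁ x) - G (σ₂ x) ∂μ‖
      ≤ lpNorm (fun x ↦ G (σ₁ x) - G (σ₂ x)) 1 μ := by
        rw [lpNorm_one_eq_integral_norm (f := fun x ↦ G (σ₁ x) - G (σ₂ x)) (hi₁.sub hi₂).1]
        exact norm_integral_le_integral_norm _
    _ ≤ K * lpNorm (σ₁ - σ₂) 1 μ := hG.lpNorm_comp_sub_le h₁ h₂ (hσ.mono_exponent hp)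
    _ ≤ K * lpNorm (σ₁ - σ₂) p μ := by gcongr; exact lpNorm_le_lpNorm_of_exponent_le hp hσ

end LipschitzOnWith

section Entropic

variable {U : Type*} [MeasurableSpace U] (η : Measure U)

noncomputable def negEntropy (σ : U → ℝ) : ℝ := ∫ v, log (σ v) * σ v ∂η

noncomputable def entropicTerm (ε : ℝ) (σ : U → ℝ) : U → ℝ :=
  fun u ↦ ε * (-log (σ u) + negEntropy η σ) * σ u

lemma entropicTerm_sub_entropicTerm (ε : ℝ) (σ₁ σ₂ : U → ℝ) :
    entropicTerm η ε σ₁ - entropicTerm η ε σ₂ =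
      ε • (-(fun u ↦ log (σ₁ u) * σ₁ u - log (σ₂ u) * σ₂ u) + negEntropy η σ₁ • (σ₁ - σ₂)
        + (negEntropy η σ₁ - negEntropy η σ₂) • σ₂) := by
  ext u
  simp only [entropicTerm, Pi.sub_apply, Pi.smul_apply, Pi.add_apply, Pi.neg_apply, smul_eq_mul]
  ring

variable [IsProbabilityMeasure η] {p : ℝ≥0∞} {a b ε M : ℝ} {K : ℝ≥0} {σ₁ σ₂ : U → ℝ}

lemma lpNorm_entropicTerm_sub_le (hp : 1 ≤ p) (ha : 0 ≤ a) (hε : 0 ≤ ε)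
    (hK : LipschitzOnWith K (fun x ↦ log x * x) (Set.Icc a b))
    (hM : ∀ x ∈ Set.Icc a b, ‖log x * x‖ ≤ M)
    (hm₁ : Measurable σ₁) (hm₂ : Measurable σ₂)
    (hσ₁ : ∀ u, σ₁ u ∈ Set.Icc a b) (hσ₂ : ∀ u, σ₂ u ∈ Set.Icc a b) :
    lpNorm (entropicTerm η ε σ₁ - entropicTerm η ε σ₂) p η
      ≤ ε * (K + M + b * K) * lpNorm (σ₁ - σ₂) p η := by
  have hbound : ∀ {σ : U → ℝ}, (∀ u, σ u ∈ Set.Icc a b) → ∀ u, ‖σ u‖ ≤ b := fun hσ u ↦ by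
    rw [Real.norm_eq_abs, abs_of_nonneg (ha.trans (hσ u).1)]
    exact (hσ u).2
  have hmemLp₂ : MemLp σ₂ p η := .of_bound hm₂.aestronglyMeasurable b (.of_forall (hbound hσ₂))
  have hΔ : MemLp (σ₁ - σ₂) p η :=
    (MemLp.of_bound hm₁.aestronglyMeasurable b (.of_forall (hbound hσ₁))).sub hmemLp₂
  have hint : ∀ {σ : U → ℝ}, Measurable σ → (∀ u, σ u ∈ Set.Icc a b) →
      Integrable (fun u ↦ log (σ u) * σ u) η := fun hm hσ ↦
    .of_bound (by fun_prop) M (.of_forall fun u ↦ hM _ (hσ u))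
  have hI₁ : |negEntropy η σ₁| ≤ M := by
    simpa [negEntropy] using
      norm_integral_le_of_norm_le_const (μ := η) (.of_forall fun u ↦ hM _ (hσ₁ u))
  have hI : |negEntropy η σ₁ - negEntropy η σ₂| ≤ K * lpNorm (σ₁ - σ₂) p η :=
    hK.norm_integral_comp_sub_le hσ₁ hσ₂ hp (hint hm₁ hσ₁) (hint hm₂ hσ₂) hΔ
  have hσ₂b : lpNorm σ₂ p η ≤ b := lpNorm_le_of_forall_norm_le (hbound hσ₂)
  set I₁ := negEntropy η σ₁
  set I₂ := negEntropy η σ₂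
  have hminkowski :
      lpNorm (-(fun u ↦ log (σ₁ u) * σ₁ u - log (σ₂ u) * σ₂ u) + I₁ • (σ₁ - σ₂)
          + (I₁ - I₂) • σ₂) p η
        ≤ lpNorm (fun u ↦ log (σ₁ u) * σ₁ u - log (σ₂ u) * σ₂ u) p η
          + |I₁| * lpNorm (σ₁ - σ₂) p η + |I₁ - I₂| * lpNorm σ₂ p η := by
    grw [lpNorm_add_le' (hmemLp₂.const_smul _) hp, lpNorm_add_le' (hΔ.const_smul _) hp,
      lpNorm_neg, lpNorm_const_smul, lpNorm_const_smul]
    simp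
  rw [entropicTerm_sub_entropicTerm, lpNorm_const_smul]
  calc ‖ε‖₊ * lpNorm _ p η
      ≤ ε * (K * lpNorm (σ₁ - σ₂) p η + M * lpNorm (σ₁ - σ₂) p η
          + K * lpNorm (σ₁ - σ₂) p η * b) := by
        rw [coe_nnnorm, Real.norm_eq_abs, abs_of_nonneg hε]
        grw [hminkowski, hK.lpNorm_comp_sub_le hσ₁ hσ₂ hΔ, hI₁, hI, hσ₂b] <;> simp [mul_nonneg]
    _ = ε * (K + M + b * K) * lpNorm (σ₁ - σ₂) p η := by ring

end Entropic

/-- The entropic replicator term `f^ε` is Lipschitz on `S_{a,b}` in the `L^p_η` norm. -/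
theorem entropic_term_lipschitz
    {U : Type*} [MeasurableSpace U] (η : Measure U) [IsProbabilityMeasure η]
    (a b ε p : ℝ) (ha : 0 < a) (ha1 : a < 1) (hb : 1 < b) (hε : 0 < ε) (hp : 1 ≤ p) :
    ∃ L : ℝ, 0 < L ∧
      ∀ σ₁ σ₂ : U → ℝ, Measurable σ₁ → Measurable σ₂ →
        (∀ u, σ₁ u ∈ Set.Icc a b) → (∀ u, σ₂ u ∈ Set.Icc a b) →
        (∫ u, σ₁ u ∂η) = 1 → (∫ u, σ₂ u ∂η) = 1 →
        (∫ u, |(ε * (-(Real.log (σ₁ u)) + ∫ v, Real.log (σ₁ v) * σ₁ v ∂η) * σ₁ u)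
              - (ε * (-(Real.log (σ₂ u)) + ∫ v, Real.log (σ₂ v) * σ₂ v ∂η) * σ₂ u)| ^ p ∂η)
            ^ (1 / p)
          ≤ L * (∫ u, |σ₁ u - σ₂ u| ^ p ∂η) ^ (1 / p) := by
  have hG : ContDiffOn ℝ 1 (fun x ↦ log x * x) (Set.Icc a b) :=
    (contDiffOn_log.mono fun x hx ↦ (ha.trans_le hx.1).ne').mul contDiffOn_id
  obtain ⟨K, hK⟩ := hG.exists_lipschitzOnWith one_ne_zero (convex_Icc a b) isCompact_Icc
  obtain ⟨M, hM⟩ := isCompact_Icc.exists_bound_of_continuousOn hG.continuousOn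
  have hM_pos : 0 < M := (mul_pos (log_pos hb) (by linarith)).trans_le
    ((le_abs_self _).trans (hM b ⟨by linarith, le_rfl⟩))
  refine ⟨ε * (K + M + b * K), by positivity, fun σ₁ σ₂ hm₁ hm₂ hσ₁ hσ₂ _ _ ↦ ?_⟩
  have hp₀ : 0 < p := by linarith
  rw [← lpNorm_ofReal_eq_integral_abs_rpow hp₀ (by fun_prop),
    ← lpNorm_ofReal_eq_integral_abs_rpow hp₀ (by fun_prop)]
  exact lpNorm_entropicTerm_sub_le η (by simpa using hp) ha.le hε.le hK hM hm₁ hm₂ hσ₁ hσ₂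
end

section
/- Let U be a measurable space with probability measure η, ε > 0, and for a bounded measurable g : U → ℝ define the energy G(σ) = ∫_U [−g(u)σ(u) + ε(σ(u)log σ(u) − σ(u) + 1)] dη(u) over probability densities σ with respect to η taking values in [a,b] with 0 < a < b. Suppose the Gibbs density σ*(u) = exp(g(u)/ε)/∫_U exp(g(v)/ε) dη(v) satisfies a ≤ σ*(u) ≤ b for all u. Then σ* is the unique minimizer of G over the set S_{a,b} of such densities, and for every σ ∈ S_{a,b}, (c/2)‖σ − σ*‖²_{L²_η} ≤ G(σ) − G(σ*), where c > 0 is any lower bound for ε/s over s ∈ [a,b] (e.g. c = ε/b). -/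
/-!
On `[a, b]` with `a > 0` the integrand `s ↦ -g s + ε (s log s - s + 1)` has second derivative
`ε / s ≥ c`, so it lies above its tangent at `t` plus `c / 2 * (s - t) ^ 2`. At `t = σ* u` the slope
of that tangent is `-g u + ε log (σ* u) = -ε log Z`, a constant (the Euler–Lagrange multiplier of
the mass constraint), so integrating against two densities of equal mass kills the linear term and
leaves `G σ* + c / 2 * ‖σ - σ*‖² ≤ G σ`. Minimality and a.e. uniqueness follow since `c > 0`.
-/

open MeasureTheory Real

/-- The strategy energy `G`. -/
noncomputable def strategyEnergy {U : Type*} [MeasurableSpace U]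
    (η : Measure U) (ε : ℝ) (g : U → ℝ) (σ : U → ℝ) : ℝ :=
  ∫ u, (-(g u) * σ u + ε * (σ u * Real.log (σ u) - σ u + 1)) ∂η

open Set

theorem ConvexOn.add_mul_sub_le_of_hasDerivAt {D : Set ℝ} {h : ℝ → ℝ} {h' s t : ℝ}
    (hconv : ConvexOn ℝ D h) (hs : s ∈ D) (ht : t ∈ D) (hd : HasDerivAt h h' t) :
    h t + h' * (s - t) ≤ h s := by
  rcases lt_trichotomy t s with hts | rfl | hst
  · have := hconv.le_slope_of_hasDerivAt ht hs hts hd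
    rw [slope_def_field, le_div_iff₀ (sub_pos.2 hts)] at this
    linarith
  · simp
  · have := hconv.slope_le_of_hasDerivAt hs ht hst hd
    rw [slope_def_field, div_le_iff₀ (sub_pos.2 hst)] at this
    linarith

theorem add_mul_sub_add_sq_le_of_hasDerivAt₂ {D : Set ℝ} (hD : Convex ℝ D)
    {f f' f'' : ℝ → ℝ} {c s t : ℝ}
    (hf : ∀ x ∈ D, HasDerivAt f (f' x) x) (hf' : ∀ x ∈ interior D, HasDerivAt f' (f'' x) x)
    (hc : ∀ x ∈ interior D, c ≤ f'' x) (hs : s ∈ D) (ht : t ∈ D) :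
    f t + f' t * (s - t) + c / 2 * (s - t) ^ 2 ≤ f s := by
  have hq : ∀ x, HasDerivAt (fun y => c / 2 * y ^ 2) (c * x) x := fun x =>
    ((hasDerivAt_pow 2 x).const_mul (c / 2)).congr_deriv (by ring)
  have hconv : ConvexOn ℝ D fun x => f x - c / 2 * x ^ 2 := by
    refine convexOn_of_hasDerivWithinAt2_nonneg hD (f' := fun x => f' x - c * x)
      (f'' := fun x => f'' x - c) ?_ ?_ ?_ ?_
    · exact fun x hx => ((hf x hx).sub (hq x)).continuousAt.continuousWithinAt
    · exact fun x hx => ((hf x (interior_subset hx)).sub (hq x)).hasDerivWithinAt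
    · intro x hx
      exact ((hf' x hx).sub ((hasDerivAt_id' x).const_mul c)).hasDerivWithinAt.congr_deriv
        (by ring)
    · exact fun x hx => sub_nonneg.2 (hc x hx)
  have := hconv.add_mul_sub_le_of_hasDerivAt hs ht ((hf t ht).sub (hq t))
  linarith

theorem mul_entropy_add_sq_le {a b c ε s t : ℝ} (ha : 0 < a) (hc : ∀ x ∈ Ioo a b, c ≤ ε / x)
    (hs : s ∈ Icc a b) (ht : t ∈ Icc a b) :
    ε * (t * log t - t + 1) + ε * log t * (s - t) + c / 2 * (s - t) ^ 2
      ≤ ε * (s * log s - s + 1) := by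
  refine add_mul_sub_add_sq_le_of_hasDerivAt₂ (convex_Icc a b)
    (f := fun x => ε * (x * log x - x + 1)) (f' := fun x => ε * log x) (f'' := fun x => ε / x)
    (fun x hx => ?_) (fun x hx => ?_) (by simpa only [interior_Icc] using hc) hs ht
  · have hx : x ≠ 0 := (ha.trans_le hx.1).ne'
    exact ((((hasDerivAt_mul_log hx).sub (hasDerivAt_id x)).add_const 1).const_mul ε).congr_deriv
      (by simp)
  · rw [interior_Icc] at hx
    exact ((hasDerivAt_log (ha.trans hx.1).ne').const_mul ε).congr_deriv (div_eq_mul_inv _ _).symm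

noncomputable def energyDensity (ε y s : ℝ) : ℝ :=
  -y * s + ε * (s * log s - s + 1)

theorem strategyEnergy_eq_integral_energyDensity {U : Type*} [MeasurableSpace U]
    (μ : Measure U) (ε : ℝ) (g σ : U → ℝ) :
    strategyEnergy μ ε g σ = ∫ u, energyDensity ε (g u) (σ u) ∂μ :=
  rfl

theorem energyDensity_add_sq_le {a b c ε s t : ℝ} (ha : 0 < a) (hc : ∀ x ∈ Ioo a b, c ≤ ε / x)
    (hs : s ∈ Icc a b) (ht : t ∈ Icc a b) (κ : ℝ) :
    energyDensity ε (ε * log t + κ) t - κ * (s - t) + c / 2 * (s - t) ^ 2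
      ≤ energyDensity ε (ε * log t + κ) s := by
  have := mul_entropy_add_sq_le ha hc hs ht
  unfold energyDensity
  linarith

theorem IsCompact.integrable_comp {U X : Type*} [MeasurableSpace U] {μ : Measure U}
    [IsFiniteMeasure μ] [TopologicalSpace X] [MeasurableSpace X] {K : Set X} (hK : IsCompact K)
    {φ : X → ℝ} (hφ : ContinuousOn φ K) (hφm : Measurable φ) {f : U → X} (hf : Measurable f)
    (hfK : ∀ u, f u ∈ K) : Integrable (fun u => φ (f u)) μ := by
  obtain ⟨C, hC⟩ := hK.exists_bound_of_continuousOn hφ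
  exact .of_bound (hφm.comp hf).aestronglyMeasurable C (ae_of_all _ fun u => hC _ (hfK u))

section Integrability

variable {U : Type*} [MeasurableSpace U] {μ : Measure U} [IsFiniteMeasure μ] {a b : ℝ}
  {σ τ : U → ℝ}

theorem integrable_of_forall_mem_Icc (hσ : Measurable σ) (hσab : ∀ u, σ u ∈ Icc a b) :
    Integrable σ μ :=
  isCompact_Icc.integrable_comp continuousOn_id measurable_id hσ hσab

theorem integrable_sub_sq_of_forall_mem_Icc (hσ : Measurable σ) (hτ : Measurable τ)
    (hσab : ∀ u, σ u ∈ Icc a b) (hτab : ∀ u, τ u ∈ Icc a b) :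
    Integrable (fun u => (σ u - τ u) ^ 2) μ :=
  (isCompact_Icc.prod isCompact_Icc).integrable_comp (φ := fun p : ℝ × ℝ => (p.1 - p.2) ^ 2)
    (by fun_prop) (by fun_prop) (hσ.prodMk hτ) fun u => ⟨hσab u, hτab u⟩

theorem integrable_energyDensity_mul_log (ha : 0 < a) (hσ : Measurable σ) (hτ : Measurable τ)
    (hσab : ∀ u, σ u ∈ Icc a b) (hτab : ∀ u, τ u ∈ Icc a b) (ε κ : ℝ) :
    Integrable (fun u => energyDensity ε (ε * log (τ u) + κ) (σ u)) μ := by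
  refine (isCompact_Icc.prod isCompact_Icc).integrable_comp
    (φ := fun p : ℝ × ℝ => energyDensity ε (ε * log p.2 + κ) p.1) ?_ ?_ (hσ.prodMk hτ)
    fun u => ⟨hσab u, hτab u⟩
  · have hlog : ContinuousOn (fun p : ℝ × ℝ => log p.2) (Icc a b ×ˢ Icc a b) :=
      continuousOn_snd.log fun p hp => (ha.trans_le hp.2.1).ne'
    unfold energyDensity
    fun_prop
  · unfold energyDensity
    fun_prop

end Integrability

section Energy

variable {U : Type*} [MeasurableSpace U] {μ : Measure U} [IsFiniteMeasure μ] {a b c ε κ : ℝ}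
  {g σ τ : U → ℝ}

theorem strategyEnergy_add_integral_sub_sq_le (ha : 0 < a) (hc : ∀ x ∈ Ioo a b, c ≤ ε / x)
    (hσ : Measurable σ) (hτ : Measurable τ) (hσab : ∀ u, σ u ∈ Icc a b)
    (hτab : ∀ u, τ u ∈ Icc a b) (hmass : ∫ u, σ u ∂μ = ∫ u, τ u ∂μ)
    (hEL : ∀ u, g u = ε * log (τ u) + κ) :
    strategyEnergy μ ε g τ + c / 2 * ∫ u, (σ u - τ u) ^ 2 ∂μ ≤ strategyEnergy μ ε g σ := by
  obtain rfl : g = fun u => ε * log (τ u) + κ := funext hEL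
  have hiσ := integrable_of_forall_mem_Icc (μ := μ) hσ hσab
  have hiτ := integrable_of_forall_mem_Icc (μ := μ) hτ hτab
  have hisq := integrable_sub_sq_of_forall_mem_Icc (μ := μ) hσ hτ hσab hτab
  have hiFτ := integrable_energyDensity_mul_log (μ := μ) ha hτ hτ hτab hτab ε κ
  have hilin : Integrable (fun u => κ * (σ u - τ u)) μ := (hiσ.sub hiτ).const_mul κ
  have hlin : ∫ u, κ * (σ u - τ u) ∂μ = 0 := by
    rw [integral_const_mul, integral_sub hiσ hiτ, hmass, sub_self, mul_zero]
  have hiaff : Integrable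
      (fun u => energyDensity ε (ε * log (τ u) + κ) (τ u) - κ * (σ u - τ u)) μ :=
    hiFτ.sub hilin
  simp only [strategyEnergy_eq_integral_energyDensity]
  calc ∫ u, energyDensity ε (ε * log (τ u) + κ) (τ u) ∂μ + c / 2 * ∫ u, (σ u - τ u) ^ 2 ∂μ
      = ∫ u, (energyDensity ε (ε * log (τ u) + κ) (τ u) - κ * (σ u - τ u)
          + c / 2 * (σ u - τ u) ^ 2) ∂μ := by
        rw [integral_add hiaff (hisq.const_mul _), integral_sub hiFτ hilin, hlin,
          sub_zero, integral_const_mul]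
    _ ≤ ∫ u, energyDensity ε (ε * log (τ u) + κ) (σ u) ∂μ :=
        integral_mono (hiaff.add (hisq.const_mul _))
          (integrable_energyDensity_mul_log ha hσ hτ hσab hτab ε κ)
          fun u => energyDensity_add_sq_le ha hc (hσab u) (hτab u) κ

end Energy

section Gibbs

variable {U : Type*} [MeasurableSpace U] {μ : Measure U} {ε : ℝ} {g σ : U → ℝ}

theorem integral_exp_div_pos (hσ : ∀ u, σ u = exp (g u / ε) / ∫ v, exp (g v / ε) ∂μ) {u : U}
    (hpos : 0 < σ u) : 0 < ∫ v, exp (g v / ε) ∂μ :=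
  (div_pos_iff_of_pos_left (exp_pos _)).1 (hσ u ▸ hpos)

theorem integral_eq_one_of_eq_exp_div
    (hσ : ∀ u, σ u = exp (g u / ε) / ∫ v, exp (g v / ε) ∂μ)
    (hZ : 0 < ∫ v, exp (g v / ε) ∂μ) : ∫ u, σ u ∂μ = 1 := by
  simp only [hσ, integral_div, div_self hZ.ne']

theorem eq_mul_log_add_of_eq_exp_div (hε : ε ≠ 0)
    (hσ : ∀ u, σ u = exp (g u / ε) / ∫ v, exp (g v / ε) ∂μ)
    (hZ : 0 < ∫ v, exp (g v / ε) ∂μ) (u : U) :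
    g u = ε * log (σ u) + ε * log (∫ v, exp (g v / ε) ∂μ) := by
  rw [hσ u, log_div (exp_ne_zero _) hZ.ne', log_exp]
  field_simp
  ring

end Gibbs

theorem ae_eq_of_integral_sub_sq_nonpos {U : Type*} [MeasurableSpace U] {μ : Measure U}
    {σ τ : U → ℝ} (hi : Integrable (fun u => (σ u - τ u) ^ 2) μ)
    (h : ∫ u, (σ u - τ u) ^ 2 ∂μ ≤ 0) : σ =ᵐ[μ] τ := by
  have h0 := (integral_eq_zero_iff_of_nonneg (fun u => sq_nonneg (σ u - τ u)) hi).1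
    (h.antisymm (integral_nonneg fun u => sq_nonneg _))
  filter_upwards [h0] with u hu
  exact sub_eq_zero.1 (pow_eq_zero_iff two_ne_zero |>.1 hu)

theorem gibbs_unique_minimizer_quadratic_growth_general
    {U : Type*} [MeasurableSpace U] (η : Measure U) [IsProbabilityMeasure η]
    (ε a b c : ℝ) (hε : 0 < ε) (ha : 0 < a)
    (g : U → ℝ) (hg : Measurable g)
    (σstar : U → ℝ)
    (hσstar : ∀ u, σstar u = Real.exp (g u / ε) / ∫ v, Real.exp (g v / ε) ∂η)
    (hσstarb : ∀ u, σstar u ∈ Set.Icc a b)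
    (hc : 0 < c) (hcb : ∀ s ∈ Set.Icc a b, c ≤ ε / s) :
    (∀ σ : U → ℝ, Measurable σ → (∀ u, σ u ∈ Set.Icc a b) → (∫ u, σ u ∂η) = 1 →
      strategyEnergy η ε g σstar ≤ strategyEnergy η ε g σ) ∧
    (∀ σ : U → ℝ, Measurable σ → (∀ u, σ u ∈ Set.Icc a b) → (∫ u, σ u ∂η) = 1 →
      strategyEnergy η ε g σ = strategyEnergy η ε g σstar → σ =ᵐ[η] σstar) ∧
    (∀ σ : U → ℝ, Measurable σ → (∀ u, σ u ∈ Set.Icc a b) → (∫ u, σ u ∂η) = 1 →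
      (c / 2) * ∫ u, (σ u - σstar u) ^ 2 ∂η
        ≤ strategyEnergy η ε g σ - strategyEnergy η ε g σstar) := by
  obtain ⟨u₀⟩ := nonempty_of_isProbabilityMeasure η
  have hZ := integral_exp_div_pos hσstar (ha.trans_le (hσstarb u₀).1)
  have hσstar_meas : Measurable σstar := by
    rw [funext hσstar]
    fun_prop
  have growth : ∀ σ : U → ℝ, Measurable σ → (∀ u, σ u ∈ Icc a b) → ∫ u, σ u ∂η = 1 →
      strategyEnergy η ε g σstar + c / 2 * ∫ u, (σ u - σstar u) ^ 2 ∂η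
        ≤ strategyEnergy η ε g σ := fun σ hσ hσab hσ1 =>
    strategyEnergy_add_integral_sub_sq_le ha (fun x hx => hcb x (Ioo_subset_Icc_self hx)) hσ
      hσstar_meas hσab hσstarb (hσ1.trans (integral_eq_one_of_eq_exp_div hσstar hZ).symm)
      (eq_mul_log_add_of_eq_exp_div hε.ne' hσstar hZ)
  refine ⟨fun σ hσ hσab hσ1 => ?_, fun σ hσ hσab hσ1 hG => ?_, fun σ hσ hσab hσ1 => ?_⟩
  · exact (le_add_of_nonneg_right (mul_nonneg (half_pos hc).le
      (integral_nonneg fun u => sq_nonneg _))).trans (growth σ hσ hσab hσ1)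
  · exact ae_eq_of_integral_sub_sq_nonpos
      (integrable_sub_sq_of_forall_mem_Icc hσ hσstar_meas hσab hσstarb)
      (nonpos_of_mul_nonpos_right (by linarith [growth σ hσ hσab hσ1]) (half_pos hc))
  · linarith [growth σ hσ hσab hσ1]

/-- The Gibbs density is the unique minimizer of the strategy energy over `S_{a,b}`,
with quadratic growth away from the minimizer. -/
theorem gibbs_unique_minimizer_quadratic_growth
    {U : Type*} [MeasurableSpace U] (η : Measure U) [IsProbabilityMeasure η]
    (ε a b c : ℝ) (hε : 0 < ε) (ha : 0 < a) (hab : a < b)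
    (g : U → ℝ) (hg : Measurable g) (M : ℝ) (hgb : ∀ u, |g u| ≤ M)
    (σstar : U → ℝ)
    (hσstar : ∀ u, σstar u = Real.exp (g u / ε) / ∫ v, Real.exp (g v / ε) ∂η)
    (hσstarb : ∀ u, σstar u ∈ Set.Icc a b)
    (hc : 0 < c) (hcb : ∀ s ∈ Set.Icc a b, c ≤ ε / s) :
    (∀ σ : U → ℝ, Measurable σ → (∀ u, σ u ∈ Set.Icc a b) → (∫ u, σ u ∂η) = 1 →
      strategyEnergy η ε g σstar ≤ strategyEnergy η ε g σ) ∧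
    (∀ σ : U → ℝ, Measurable σ → (∀ u, σ u ∈ Set.Icc a b) → (∫ u, σ u ∂η) = 1 →
      strategyEnergy η ε g σ = strategyEnergy η ε g σstar → σ =ᵐ[η] σstar) ∧
    (∀ σ : U → ℝ, Measurable σ → (∀ u, σ u ∈ Set.Icc a b) → (∫ u, σ u ∂η) = 1 →
      (c / 2) * ∫ u, (σ u - σstar u) ^ 2 ∂η
        ≤ strategyEnergy η ε g σ - strategyEnergy η ε g σstar) :=
  gibbs_unique_minimizer_quadratic_growth_general η ε a b c hε ha g hg σstar hσstar hσstarb hc hcb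
end

section
/- Let U be a compact metric space with probability measure η, ε > 0, J : ℝ^d × U × ℝ^d → ℝ bounded Lipschitz with ‖J‖_∞ + Lip(J) ≤ M, and e : ℝ^d × U → ℝ^d bounded Lipschitz. For a probability measure μ on ℝ^d with finite first moment define σ^J(μ)(x,u) = exp((1/ε)∫ J(x,u,x')dμ(x')) / ∫_U exp((1/ε)∫ J(x,v,x')dμ(x')) dη(v) and v^J(μ)(x) = ∫_U e(x,u) σ^J(μ)(x,u) dη(u). Then there exists C = C(M, e, ε) such that for all μ, μ' with finite first moments and all x, x' ∈ ℝ^d: ‖v^J(μ)(x) − v^{J'}(μ')(x')‖ ≤ C(W₁(μ,μ') + ‖J−J'‖_∞ + ‖x−x'‖), where J' also satisfies ‖J'‖_∞ + Lip(J') ≤ M. -/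
open MeasureTheory Real

/-- The mean-field Gibbs strategy `σ^J(μ)(x,·)`. -/
noncomputable def mfGibbs {U : Type*} [MeasurableSpace U] {d : ℕ}
    (η : Measure U) (ε : ℝ)
    (J : EuclideanSpace ℝ (Fin d) → U → EuclideanSpace ℝ (Fin d) → ℝ)
    (μ : Measure (EuclideanSpace ℝ (Fin d)))
    (x : EuclideanSpace ℝ (Fin d)) (u : U) : ℝ :=
  Real.exp ((1 / ε) * ∫ y, J x u y ∂μ)
    / ∫ v, Real.exp ((1 / ε) * ∫ y, J x v y ∂μ) ∂η

/-- The mean-field velocity `v^J(μ)(x)`. -/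
noncomputable def mfVelocity {U : Type*} [MeasurableSpace U] {d : ℕ}
    (η : Measure U) (ε : ℝ)
    (J : EuclideanSpace ℝ (Fin d) → U → EuclideanSpace ℝ (Fin d) → ℝ)
    (e : EuclideanSpace ℝ (Fin d) → U → EuclideanSpace ℝ (Fin d))
    (μ : Measure (EuclideanSpace ℝ (Fin d)))
    (x : EuclideanSpace ℝ (Fin d)) : EuclideanSpace ℝ (Fin d) :=
  ∫ u, mfGibbs η ε J μ x u • e x u ∂η

/-!
The Gibbs strategy is the softmax `exp f / ∫ exp f dη` of the potential
`f = (1/ε) ∫ J(x, ·, y) dμ(y)`, which is bounded by `M / ε`. On potentials bounded by `b` the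
softmax is Lipschitz for the sup norm: `exp` is `exp b`-Lipschitz on `(-∞, b]` and the
normalising constant is at least `exp (-b)`. The potential moves by at most
`(D + M ‖x - x'‖ + M W) / ε`, the last term by Kantorovich duality applied to `J'(x', u, ·) / M`.
Integrating the difference of the Gibbs densities against the bounded Lipschitz field `e` gives
the bound on the velocities.
-/

open scoped NNReal

lemma abs_exp_sub_exp_le {b s t : ℝ} (hs : s ≤ b) (ht : t ≤ b) :
    |exp s - exp t| ≤ exp b * |s - t| := by
  have hderiv : ∀ x ∈ Set.Iic b, ‖deriv exp x‖ ≤ exp b := fun x hx => by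
    rw [Real.deriv_exp, Real.norm_eq_abs, abs_of_pos (exp_pos x)]
    exact exp_le_exp.2 hx
  simpa only [Real.norm_eq_abs] using
    (convex_Iic b).norm_image_sub_le_of_norm_deriv_le (fun _ _ => differentiableAt_exp) hderiv ht hs

lemma abs_div_sub_div_le {p q Z Z' a B : ℝ} (ha : 0 < a) (hZ : a ≤ Z) (hZ' : a ≤ Z')
    (hq : |q| ≤ B) (hZ'B : Z' ≤ B) :
    |p / Z - q / Z'| ≤ B * (|p - q| + |Z - Z'|) / a ^ 2 := by
  have hZ0 : 0 < Z := ha.trans_le hZ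
  have hZ'0 : 0 < Z' := ha.trans_le hZ'
  have hB : 0 ≤ B := (abs_nonneg q).trans hq
  have hnum : |Z' * (p - q) + q * (Z' - Z)| ≤ B * (|p - q| + |Z - Z'|) :=
    calc |Z' * (p - q) + q * (Z' - Z)| ≤ |Z' * (p - q)| + |q * (Z' - Z)| := abs_add_le _ _
      _ = Z' * |p - q| + |q| * |Z - Z'| := by
          rw [abs_mul, abs_mul, abs_of_pos hZ'0, abs_sub_comm Z' Z]
      _ ≤ B * (|p - q| + |Z - Z'|) := by rw [mul_add]; gcongr
  calc |p / Z - q / Z'| = |Z' * (p - q) + q * (Z' - Z)| / (Z * Z') := by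
        rw [div_sub_div _ _ hZ0.ne' hZ'0.ne', abs_div, abs_of_pos (mul_pos hZ0 hZ'0)]
        ring_nf
    _ ≤ B * (|p - q| + |Z - Z'|) / (a * a) :=
        div_le_div₀ (by positivity) hnum (mul_pos ha ha) (mul_le_mul hZ hZ' ha.le hZ0.le)
    _ = B * (|p - q| + |Z - Z'|) / a ^ 2 := by ring

section Integral

variable {α : Type*} [MeasurableSpace α]

lemma norm_integral_sub_integral_le {E : Type*} [NormedAddCommGroup E] [NormedSpace ℝ E]
    {μ : Measure α} [IsProbabilityMeasure μ] {F G : α → E} {c : ℝ}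
    (hF : Integrable F μ) (hG : Integrable G μ) (h : ∀ a, ‖F a - G a‖ ≤ c) :
    ‖∫ a, F a ∂μ - ∫ a, G a ∂μ‖ ≤ c := by
  rw [← integral_sub hF hG]
  simpa using norm_integral_le_of_norm_le_const (μ := μ) (ae_of_all _ h)

lemma abs_integral_sub_integral_le {μ : Measure α} [IsProbabilityMeasure μ] {f g : α → ℝ} {c : ℝ}
    (hf : Integrable f μ) (hg : Integrable g μ) (h : ∀ a, |f a - g a| ≤ c) :
    |(∫ a, f a ∂μ) - ∫ a, g a ∂μ| ≤ c :=
  norm_integral_sub_integral_le hf hg h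

lemma abs_integral_le_of_abs_le {μ : Measure α} [IsProbabilityMeasure μ] {f : α → ℝ} {c : ℝ}
    (h : ∀ a, |f a| ≤ c) : |∫ a, f a ∂μ| ≤ c := by
  simpa using norm_integral_le_of_norm_le_const (μ := μ)
    (ae_of_all _ fun a => (Real.norm_eq_abs (f a)).trans_le (h a))

lemma norm_integral_smul_sub_integral_smul_le {E : Type*} [NormedAddCommGroup E] [NormedSpace ℝ E]
    {μ : Measure α} [IsProbabilityMeasure μ]
    {σ σ' : α → ℝ} {F F' : α → E} {a b c m : ℝ}
    (hσF : Integrable (fun u => σ u • F u) μ) (hσF' : Integrable (fun u => σ' u • F' u) μ)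
    (hσ : ∀ u, |σ u - σ' u| ≤ a) (hσ' : ∀ u, |σ' u| ≤ b) (hF : ∀ u, ‖F u‖ ≤ m)
    (hFF' : ∀ u, ‖F u - F' u‖ ≤ c) :
    ‖∫ u, σ u • F u ∂μ - ∫ u, σ' u • F' u ∂μ‖ ≤ a * m + b * c := by
  refine norm_integral_sub_integral_le hσF hσF' fun u => ?_
  have hsplit : σ u • F u - σ' u • F' u = (σ u - σ' u) • F u + σ' u • (F u - F' u) := by
    rw [sub_smul, smul_sub]; abel
  calc ‖σ u • F u - σ' u • F' u‖ ≤ |σ u - σ' u| * ‖F u‖ + |σ' u| * ‖F u - F' u‖ := by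
        rw [hsplit, ← Real.norm_eq_abs, ← Real.norm_eq_abs, ← norm_smul, ← norm_smul]
        exact norm_add_le _ _
    _ ≤ a * m + b * c :=
        add_le_add (mul_le_mul (hσ u) (hF u) (norm_nonneg _) ((abs_nonneg _).trans (hσ u)))
          (mul_le_mul (hσ' u) (hFF' u) (norm_nonneg _) ((abs_nonneg _).trans (hσ' u)))

lemma abs_integral_sub_integral_le_of_lipschitzWith {X : Type*} [PseudoMetricSpace X]
    [MeasurableSpace X] {μ μ' : Measure X} {W : ℝ}
    (hW : ∀ φ : X → ℝ, LipschitzWith 1 φ → |(∫ y, φ y ∂μ) - ∫ y, φ y ∂μ'| ≤ W)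
    {K : ℝ≥0} (hK : 0 < K) {f : X → ℝ} (hf : LipschitzWith K f) :
    |(∫ y, f y ∂μ) - ∫ y, f y ∂μ'| ≤ K * W := by
  have hK' : (0 : ℝ) < K := hK
  have hscaled : LipschitzWith 1 fun y => (K : ℝ)⁻¹ * f y := by
    refine LipschitzWith.of_dist_le_mul fun y₁ y₂ => ?_
    rw [Real.dist_eq, ← mul_sub, abs_mul, abs_of_pos (inv_pos.2 hK'), NNReal.coe_one, one_mul,
      inv_mul_le_iff₀ hK', ← Real.dist_eq]
    exact hf.dist_le_mul y₁ y₂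
  have h := hW _ hscaled
  rwa [integral_const_mul, integral_const_mul, ← mul_sub, abs_mul, abs_of_pos (inv_pos.2 hK'),
    inv_mul_le_iff₀ hK'] at h

end Integral

section Gibbs

variable {U : Type*} [MeasurableSpace U] (η : Measure U)

noncomputable def gibbsDensity (f : U → ℝ) (u : U) : ℝ :=
  exp (f u) / ∫ v, exp (f v) ∂η

variable {f : U → ℝ}

lemma measurable_gibbsDensity (hf : Measurable f) : Measurable (gibbsDensity η f) :=
  hf.exp.div_const _

lemma gibbsDensity_nonneg (u : U) : 0 ≤ gibbsDensity η f u :=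
  div_nonneg (exp_pos _).le (integral_nonneg fun _ => (exp_pos _).le)

variable [IsProbabilityMeasure η] {g : U → ℝ} {b : ℝ}

lemma integrable_exp_of_abs_le (hf : Measurable f) (hfb : ∀ u, |f u| ≤ b) :
    Integrable (fun u => exp (f u)) η :=
  .of_bound hf.exp.aestronglyMeasurable (exp b) <| ae_of_all _ fun u => by
    rw [Real.norm_eq_abs, abs_of_pos (exp_pos _)]
    exact exp_le_exp.2 (le_of_abs_le (hfb u))

lemma exp_neg_le_integral_exp (hf : Measurable f) (hfb : ∀ u, |f u| ≤ b) :
    exp (-b) ≤ ∫ u, exp (f u) ∂η := by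
  simpa using integral_mono (integrable_const (exp (-b))) (integrable_exp_of_abs_le η hf hfb)
    fun u => exp_le_exp.2 (neg_le_of_abs_le (hfb u))

lemma integral_exp_le (hfb : ∀ u, |f u| ≤ b) : ∫ u, exp (f u) ∂η ≤ exp b :=
  (le_abs_self _).trans <| abs_integral_le_of_abs_le fun u => by
    rw [abs_of_pos (exp_pos _)]
    exact exp_le_exp.2 (le_of_abs_le (hfb u))

lemma gibbsDensity_le (hf : Measurable f) (hfb : ∀ u, |f u| ≤ b) (u : U) :
    gibbsDensity η f u ≤ exp b ^ 2 := by
  calc gibbsDensity η f u ≤ exp b / exp (-b) :=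
        div_le_div₀ (exp_pos b).le (exp_le_exp.2 (le_of_abs_le (hfb u))) (exp_pos _)
          (exp_neg_le_integral_exp η hf hfb)
    _ = exp b ^ 2 := by rw [exp_neg, div_inv_eq_mul, sq]

lemma integrable_gibbsDensity (hf : Measurable f) (hfb : ∀ u, |f u| ≤ b) :
    Integrable (gibbsDensity η f) η :=
  .of_bound (measurable_gibbsDensity η hf).aestronglyMeasurable (exp b ^ 2) <|
    ae_of_all _ fun u => by
    rw [Real.norm_eq_abs, abs_of_nonneg (gibbsDensity_nonneg η u)]
    exact gibbsDensity_le η hf hfb u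

lemma abs_gibbsDensity_sub_le (hf : Measurable f) (hg : Measurable g) (hfb : ∀ u, |f u| ≤ b)
    (hgb : ∀ u, |g u| ≤ b) {δ : ℝ} (hfg : ∀ u, |f u - g u| ≤ δ) (u : U) :
    |gibbsDensity η f u - gibbsDensity η g u| ≤ 2 * exp b ^ 4 * δ := by
  have hexp : ∀ v, |exp (f v) - exp (g v)| ≤ exp b * δ := fun v =>
    (abs_exp_sub_exp_le (le_of_abs_le (hfb v)) (le_of_abs_le (hgb v))).trans
      (mul_le_mul_of_nonneg_left (hfg v) (exp_pos b).le)
  have hZ : |(∫ v, exp (f v) ∂η) - ∫ v, exp (g v) ∂η| ≤ exp b * δ :=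
    abs_integral_sub_integral_le (integrable_exp_of_abs_le η hf hfb)
      (integrable_exp_of_abs_le η hg hgb) hexp
  have hgu : |exp (g u)| ≤ exp b := by
    rw [abs_of_pos (exp_pos _)]
    exact exp_le_exp.2 (le_of_abs_le (hgb u))
  calc |gibbsDensity η f u - gibbsDensity η g u|
      ≤ exp b * (|exp (f u) - exp (g u)| + |(∫ v, exp (f v) ∂η) - ∫ v, exp (g v) ∂η|)
          / exp (-b) ^ 2 :=
        abs_div_sub_div_le (exp_pos _) (exp_neg_le_integral_exp η hf hfb)
          (exp_neg_le_integral_exp η hg hgb) hgu (integral_exp_le η hgb)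
    _ ≤ exp b * (exp b * δ + exp b * δ) / exp (-b) ^ 2 := by gcongr; exact hexp u
    _ = 2 * exp b ^ 4 * δ := by rw [exp_neg]; field_simp; ring

end Gibbs

section Payoff

variable {X U : Type*} [SeminormedAddCommGroup X] [PseudoMetricSpace U]

structure IsBoundedLipschitzPayoff (M : ℝ) (J : X → U → X → ℝ) : Prop where
  abs_le : ∀ y u y', |J y u y'| ≤ M
  abs_sub_le : ∀ y₁ y₂ u₁ u₂ y₁' y₂', |J y₁ u₁ y₁' - J y₂ u₂ y₂'|
    ≤ M * (‖y₁ - y₂‖ + dist u₁ u₂ + ‖y₁' - y₂'‖)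

noncomputable def mfPotential [MeasurableSpace X] (ε : ℝ) (J : X → U → X → ℝ) (μ : Measure X)
    (x : X) (u : U) : ℝ :=
  (1 / ε) * ∫ y, J x u y ∂μ

namespace IsBoundedLipschitzPayoff

variable {M : ℝ} {J J' : X → U → X → ℝ}

lemma abs_sub_le_left (hJ : IsBoundedLipschitzPayoff M J) (y₁ y₂ : X) (u : U) (y' : X) :
    |J y₁ u y' - J y₂ u y'| ≤ M * ‖y₁ - y₂‖ := by
  simpa using hJ.abs_sub_le y₁ y₂ u u y' y'

lemma abs_sub_le_mid (hJ : IsBoundedLipschitzPayoff M J) (y : X) (u₁ u₂ : U) (y' : X) :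
    |J y u₁ y' - J y u₂ y'| ≤ M * dist u₁ u₂ := by
  simpa using hJ.abs_sub_le y y u₁ u₂ y' y'

lemma lipschitzWith_right (hJ : IsBoundedLipschitzPayoff M J) (y : X) (u : U) :
    LipschitzWith (Real.toNNReal M) (J y u) :=
  .of_dist_le' fun y₁' y₂' => by
    simpa [Real.dist_eq, dist_eq_norm] using hJ.abs_sub_le y y u u y₁' y₂'

variable [MeasurableSpace X] {ε : ℝ}

lemma abs_mfPotential_le (hε : 0 < ε) (hJ : IsBoundedLipschitzPayoff M J) (μ : Measure X)
    [IsProbabilityMeasure μ] (x : X) (u : U) : |mfPotential ε J μ x u| ≤ M / ε := by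
  rw [mfPotential, abs_mul, abs_of_pos (one_div_pos.2 hε), one_div_mul_eq_div]
  exact div_le_div_of_nonneg_right (abs_integral_le_of_abs_le (hJ.abs_le x u)) hε.le

variable [OpensMeasurableSpace X]

lemma integrable (hJ : IsBoundedLipschitzPayoff M J) (ν : Measure X) [IsFiniteMeasure ν]
    (y : X) (u : U) : Integrable (J y u) ν :=
  .of_bound (hJ.lipschitzWith_right y u).continuous.aestronglyMeasurable M
    (ae_of_all _ fun y' => (Real.norm_eq_abs _).trans_le (hJ.abs_le y u y'))

lemma continuous_integral (hJ : IsBoundedLipschitzPayoff M J) (ν : Measure X)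
    [IsProbabilityMeasure ν] (y : X) : Continuous fun u => ∫ y', J y u y' ∂ν :=
  (LipschitzWith.of_dist_le' fun u₁ u₂ => by
    rw [Real.dist_eq]
    exact abs_integral_sub_integral_le (hJ.integrable ν y u₁) (hJ.integrable ν y u₂)
      fun y' => hJ.abs_sub_le_mid y u₁ u₂ y').continuous

lemma abs_integral_sub_le (hM : 0 < M) (hJ : IsBoundedLipschitzPayoff M J)
    (hJ' : IsBoundedLipschitzPayoff M J') {μ μ' : Measure X} [IsProbabilityMeasure μ]
    [IsProbabilityMeasure μ'] {W D : ℝ}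
    (hW : ∀ φ : X → ℝ, LipschitzWith 1 φ → |(∫ y, φ y ∂μ) - ∫ y, φ y ∂μ'| ≤ W)
    (hD : ∀ y u y', |J y u y' - J' y u y'| ≤ D) (x x' : X) (u : U) :
    |(∫ y, J x u y ∂μ) - ∫ y, J' x' u y ∂μ'| ≤ D + M * ‖x - x'‖ + M * W := by
  have hpayoff : |(∫ y, J x u y ∂μ) - ∫ y, J' x u y ∂μ| ≤ D :=
    abs_integral_sub_integral_le (hJ.integrable μ x u) (hJ'.integrable μ x u) (hD x u)
  have hlocation : |(∫ y, J' x u y ∂μ) - ∫ y, J' x' u y ∂μ| ≤ M * ‖x - x'‖ :=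
    abs_integral_sub_integral_le (hJ'.integrable μ x u) (hJ'.integrable μ x' u)
      (hJ'.abs_sub_le_left x x' u)
  have hmeasure : |(∫ y, J' x' u y ∂μ) - ∫ y, J' x' u y ∂μ'| ≤ M * W := by
    simpa only [Real.coe_toNNReal _ hM.le] using abs_integral_sub_integral_le_of_lipschitzWith hW
      (Real.toNNReal_pos.2 hM) (hJ'.lipschitzWith_right x' u)
  calc |(∫ y, J x u y ∂μ) - ∫ y, J' x' u y ∂μ'|
      ≤ |(∫ y, J x u y ∂μ) - ∫ y, J' x u y ∂μ| + |(∫ y, J' x u y ∂μ) - ∫ y, J' x' u y ∂μ|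
        + |(∫ y, J' x' u y ∂μ) - ∫ y, J' x' u y ∂μ'| :=
        (_root_.abs_sub_le _ _ _).trans (add_le_add (_root_.abs_sub_le _ _ _) le_rfl)
    _ ≤ D + M * ‖x - x'‖ + M * W := by gcongr

variable [MeasurableSpace U] [OpensMeasurableSpace U]

lemma measurable_mfPotential (hJ : IsBoundedLipschitzPayoff M J) (μ : Measure X)
    [IsProbabilityMeasure μ] (x : X) : Measurable (mfPotential ε J μ x) :=
  (continuous_const.mul (hJ.continuous_integral μ x)).measurable

end IsBoundedLipschitzPayoff

end Payoff

section MeanField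

variable {U : Type*} [MeasurableSpace U] (η : Measure U) {d : ℕ} {ε M : ℝ}
  {J J' : EuclideanSpace ℝ (Fin d) → U → EuclideanSpace ℝ (Fin d) → ℝ}
  {μ μ' : Measure (EuclideanSpace ℝ (Fin d))}

lemma mfGibbs_eq_gibbsDensity (x : EuclideanSpace ℝ (Fin d)) (u : U) :
    mfGibbs η ε J μ x u = gibbsDensity η (mfPotential ε J μ x) u :=
  rfl

variable [PseudoMetricSpace U] [OpensMeasurableSpace U] [IsProbabilityMeasure η]
  [IsProbabilityMeasure μ] [IsProbabilityMeasure μ']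

lemma abs_mfGibbs_sub_le (hε : 0 < ε) (hM : 0 < M) (hJ : IsBoundedLipschitzPayoff M J)
    (hJ' : IsBoundedLipschitzPayoff M J') {W D : ℝ}
    (hW : ∀ φ : EuclideanSpace ℝ (Fin d) → ℝ, LipschitzWith 1 φ →
      |(∫ y, φ y ∂μ) - ∫ y, φ y ∂μ'| ≤ W)
    (hD : ∀ y u y', |J y u y' - J' y u y'| ≤ D) (x x' : EuclideanSpace ℝ (Fin d)) (u : U) :
    |mfGibbs η ε J μ x u - mfGibbs η ε J' μ' x' u|
      ≤ 2 * exp (M / ε) ^ 4 * ((D + M * ‖x - x'‖ + M * W) / ε) := by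
  refine abs_gibbsDensity_sub_le η (hJ.measurable_mfPotential μ x)
    (hJ'.measurable_mfPotential μ' x') (hJ.abs_mfPotential_le hε μ x)
    (hJ'.abs_mfPotential_le hε μ' x') (fun v => ?_) u
  rw [mfPotential, mfPotential, ← mul_sub, abs_mul, abs_of_pos (one_div_pos.2 hε),
    one_div_mul_eq_div]
  exact div_le_div_of_nonneg_right (hJ.abs_integral_sub_le hM hJ' hW hD x x' v) hε.le

lemma integrable_mfGibbs_smul (hε : 0 < ε) (hJ : IsBoundedLipschitzPayoff M J)
    {F : U → EuclideanSpace ℝ (Fin d)} {m : ℝ} (hFm : Measurable F) (hF : ∀ u, ‖F u‖ ≤ m)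
    (x : EuclideanSpace ℝ (Fin d)) :
    Integrable (fun u => mfGibbs η ε J μ x u • F u) η :=
  (integrable_gibbsDensity η (hJ.measurable_mfPotential μ x)
    (hJ.abs_mfPotential_le hε μ x)).smul_bdd m hFm.aestronglyMeasurable (ae_of_all _ hF)

lemma abs_mfGibbs_le (hε : 0 < ε) (hJ : IsBoundedLipschitzPayoff M J)
    (x : EuclideanSpace ℝ (Fin d)) (u : U) : |mfGibbs η ε J μ x u| ≤ exp (M / ε) ^ 2 := by
  rw [mfGibbs_eq_gibbsDensity, abs_of_nonneg (gibbsDensity_nonneg η u)]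
  exact gibbsDensity_le η (hJ.measurable_mfPotential μ x) (hJ.abs_mfPotential_le hε μ x) u

lemma norm_mfVelocity_sub_le (hε : 0 < ε) (hM : 0 < M) (hJ : IsBoundedLipschitzPayoff M J)
    (hJ' : IsBoundedLipschitzPayoff M J') {W D Ke Me : ℝ}
    {e : EuclideanSpace ℝ (Fin d) → U → EuclideanSpace ℝ (Fin d)}
    (heb : ∀ x u, ‖e x u‖ ≤ Me)
    (heL : ∀ x₁ x₂ u₁ u₂, ‖e x₁ u₁ - e x₂ u₂‖ ≤ Ke * (‖x₁ - x₂‖ + dist u₁ u₂))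
    (hem : ∀ x, Measurable (e x))
    (hW : ∀ φ : EuclideanSpace ℝ (Fin d) → ℝ, LipschitzWith 1 φ →
      |(∫ y, φ y ∂μ) - ∫ y, φ y ∂μ'| ≤ W)
    (hD : ∀ y u y', |J y u y' - J' y u y'| ≤ D) (x x' : EuclideanSpace ℝ (Fin d)) :
    ‖mfVelocity η ε J e μ x - mfVelocity η ε J' e μ' x'‖
      ≤ 2 * exp (M / ε) ^ 4 * ((D + M * ‖x - x'‖ + M * W) / ε) * Me
        + exp (M / ε) ^ 2 * (Ke * ‖x - x'‖) :=
  norm_integral_smul_sub_integral_smul_le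
    (integrable_mfGibbs_smul η hε hJ (hem x) (heb x) x)
    (integrable_mfGibbs_smul η hε hJ' (hem x') (heb x') x')
    (abs_mfGibbs_sub_le η hε hM hJ hJ' hW hD x x') (abs_mfGibbs_le η hε hJ' x') (heb x)
    fun u => by simpa using heL x x' u u

end MeanField

theorem mfVelocity_lipschitz_general
    {U : Type*} [MetricSpace U] [MeasurableSpace U] [BorelSpace U]
    {d : ℕ} (η : Measure U) [IsProbabilityMeasure η]
    (ε M Ke Me : ℝ) (hε : 0 < ε) (hM : 0 < M)
    (e : EuclideanSpace ℝ (Fin d) → U → EuclideanSpace ℝ (Fin d))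
    (heb : ∀ x u, ‖e x u‖ ≤ Me)
    (heL : ∀ x₁ x₂ u₁ u₂, ‖e x₁ u₁ - e x₂ u₂‖ ≤ Ke * (‖x₁ - x₂‖ + dist u₁ u₂))
    (hem : ∀ x, Measurable (e x)) :
    ∃ C : ℝ, 0 < C ∧
      ∀ (J J' : EuclideanSpace ℝ (Fin d) → U → EuclideanSpace ℝ (Fin d) → ℝ),
        (∀ y u y', |J y u y'| ≤ M) → (∀ y u y', |J' y u y'| ≤ M) →
        (∀ y₁ y₂ u₁ u₂ y₁' y₂', |J y₁ u₁ y₁' - J y₂ u₂ y₂'|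
          ≤ M * (‖y₁ - y₂‖ + dist u₁ u₂ + ‖y₁' - y₂'‖)) →
        (∀ y₁ y₂ u₁ u₂ y₁' y₂', |J' y₁ u₁ y₁' - J' y₂ u₂ y₂'|
          ≤ M * (‖y₁ - y₂‖ + dist u₁ u₂ + ‖y₁' - y₂'‖)) →
      ∀ (μ μ' : Measure (EuclideanSpace ℝ (Fin d))),
        IsProbabilityMeasure μ → IsProbabilityMeasure μ' →
        Integrable (fun y => ‖y‖) μ → Integrable (fun y => ‖y‖) μ' →
      ∀ (W D : ℝ),
        (∀ φ : EuclideanSpace ℝ (Fin d) → ℝ, LipschitzWith 1 φ →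
          |(∫ y, φ y ∂μ) - ∫ y, φ y ∂μ'| ≤ W) →
        (∀ y u y', |J y u y' - J' y u y'| ≤ D) →
      ∀ x x' : EuclideanSpace ℝ (Fin d),
        ‖mfVelocity η ε J e μ x - mfVelocity η ε J' e μ' x'‖
          ≤ C * (W + D + ‖x - x'‖) := by
  obtain ⟨u₀⟩ := nonempty_of_isProbabilityMeasure η
  have hMe : 0 ≤ Me := (norm_nonneg _).trans (heb 0 u₀)
  set A := 2 * exp (M / ε) ^ 4 / ε * Me
  set B := exp (M / ε) ^ 2
  refine ⟨A * (M + 1) + B * |Ke| + 1, by positivity, ?_⟩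
  intro J J' hJb hJ'b hJL hJ'L μ μ' _ _ _ _ W D hW hD x x'
  have hW0 : 0 ≤ W := by simpa using hW 0 ((LipschitzWith.const 0).weaken zero_le_one)
  have hD0 : 0 ≤ D := (abs_nonneg _).trans (hD 0 u₀ 0)
  set r := ‖x - x'‖
  have hr : 0 ≤ r := norm_nonneg _
  have hpotential : D + M * r + M * W ≤ (M + 1) * (W + D + r) := by nlinarith
  have hlocation : Ke * r ≤ |Ke| * (W + D + r) :=
    (mul_le_mul_of_nonneg_right (le_abs_self Ke) hr).trans (by gcongr; linarith)
  calc ‖mfVelocity η ε J e μ x - mfVelocity η ε J' e μ' x'‖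
      ≤ A * (D + M * r + M * W) + B * (Ke * r) := by
        convert norm_mfVelocity_sub_le η hε hM ⟨hJb, hJL⟩ ⟨hJ'b, hJ'L⟩ heb heL hem hW hD x x'
          using 1
        ring
    _ ≤ A * ((M + 1) * (W + D + r)) + B * (|Ke| * (W + D + r)) := by gcongr
    _ ≤ (A * (M + 1) + B * |Ke| + 1) * (W + D + r) := by nlinarith

/-- Lipschitz dependence of the mean-field velocity on the measure (through the
Kantorovich dual bound `W`), the payoff function and the location. -/
theorem mfVelocity_lipschitz
    {U : Type*} [MetricSpace U] [CompactSpace U] [MeasurableSpace U] [BorelSpace U]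
    {d : ℕ} (η : Measure U) [IsProbabilityMeasure η]
    (ε M Ke Me : ℝ) (hε : 0 < ε) (hM : 0 < M)
    (e : EuclideanSpace ℝ (Fin d) → U → EuclideanSpace ℝ (Fin d))
    (heb : ∀ x u, ‖e x u‖ ≤ Me)
    (heL : ∀ x₁ x₂ u₁ u₂, ‖e x₁ u₁ - e x₂ u₂‖ ≤ Ke * (‖x₁ - x₂‖ + dist u₁ u₂))
    (hem : ∀ x, Measurable (e x)) :
    ∃ C : ℝ, 0 < C ∧
      ∀ (J J' : EuclideanSpace ℝ (Fin d) → U → EuclideanSpace ℝ (Fin d) → ℝ),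
        (∀ y u y', |J y u y'| ≤ M) → (∀ y u y', |J' y u y'| ≤ M) →
        (∀ y₁ y₂ u₁ u₂ y₁' y₂', |J y₁ u₁ y₁' - J y₂ u₂ y₂'|
          ≤ M * (‖y₁ - y₂‖ + dist u₁ u₂ + ‖y₁' - y₂'‖)) →
        (∀ y₁ y₂ u₁ u₂ y₁' y₂', |J' y₁ u₁ y₁' - J' y₂ u₂ y₂'|
          ≤ M * (‖y₁ - y₂‖ + dist u₁ u₂ + ‖y₁' - y₂'‖)) →
      ∀ (μ μ' : Measure (EuclideanSpace ℝ (Fin d))),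
        IsProbabilityMeasure μ → IsProbabilityMeasure μ' →
        Integrable (fun y => ‖y‖) μ → Integrable (fun y => ‖y‖) μ' →
      ∀ (W D : ℝ),
        (∀ φ : EuclideanSpace ℝ (Fin d) → ℝ, LipschitzWith 1 φ →
          |(∫ y, φ y ∂μ) - ∫ y, φ y ∂μ'| ≤ W) →
        (∀ y u y', |J y u y' - J' y u y'| ≤ D) →
      ∀ x x' : EuclideanSpace ℝ (Fin d),
        ‖mfVelocity η ε J e μ x - mfVelocity η ε J' e μ' x'‖
          ≤ C * (W + D + ‖x - x'‖) :=
  mfVelocity_lipschitz_general η ε M Ke Me hε hM e heb heL hem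
end
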